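/- Let X be a finite subset of α with n = |X| even and n ≥ 2, and let x⁻ ∈ R(X). Set X' = X \ {x⁻}. Then L(X') = L(X) and R(X') = R(X) \ {x⁻}. -/
import Mathlib

open Finset

/-- Median index `I(n) = ⌈n/2⌉`. -/
def medianIdx (n : ℕ) : ℕ := (n + 1) / 2

/-- 1-indexed rank of `x` in `X`: the number of elements of `X` that are `≤ x`.
For `x ∈ X`, `rank X x = i` means `x` is the `i`-th smallest element of `X`. -/
def rank {α : Type*} [LinearOrder α] (X : Finset α) (x : α) : ℕ :=
  (X.filter (fun y => y ≤ x)).card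

/-- Left part of the median partition: elements of rank `< I(|X|)`. -/
def medL {α : Type*} [LinearOrder α] (X : Finset α) : Finset α :=
  X.filter (fun x => rank X x < medianIdx X.card)

/-- Right part of the median partition: elements of rank `≥ I(|X|)`. -/
def medR {α : Type*} [LinearOrder α] (X : Finset α) : Finset α :=
  X.filter (fun x => medianIdx X.card ≤ rank X x)

lemma rank_lt_rank {α : Type*} [LinearOrder α] (X : Finset α) {a b : α}
    (hb : b ∈ X) (hab : a < b) : rank X a < rank X b := by
  apply card_lt_card
  constructor
  · intro y hy
    rw [mem_filter] at hy ⊢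
    exact ⟨hy.1, le_trans hy.2 hab.le⟩
  · intro h
    have := h (mem_filter.mpr ⟨hb, le_refl b⟩)
    rw [mem_filter] at this
    exact absurd this.2 (not_le.mpr hab)

lemma rank_sdiff {α : Type*} [LinearOrder α] (X : Finset α) (xm x : α)
    (hxm : xm ∈ X) :
    rank (X \ {xm}) x = if xm ≤ x then rank X x - 1 else rank X x := by
  rw [sdiff_singleton_eq_erase]
  unfold rank
  rw [filter_erase]
  split_ifs with h
  · have hm : xm ∈ X.filter (fun y => y ≤ x) := mem_filter.mpr ⟨hxm, h⟩
    rw [card_erase_of_mem hm]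
  · rw [erase_eq_of_notMem]
    intro hmem
    exact h (mem_filter.mp hmem).2

theorem median_delete_even_right {α : Type*} [LinearOrder α]
    (X : Finset α) (hn : 2 ≤ X.card) (heven : Even X.card)
    (xm : α) (hxm : xm ∈ medR X)
    (X' : Finset α) (hX' : X' = X \ {xm}) :
    medL X' = medL X ∧ medR X' = medR X \ {xm} := by
  subst hX'
  rw [medR, mem_filter] at hxm
  obtain ⟨hxmX, hxmrank⟩ := hxm
  obtain ⟨k, hk⟩ := heven
  have hcard' : (X \ {xm}).card = X.card - 1 := by
    rw [sdiff_singleton_eq_erase, card_erase_of_mem hxmX]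
  have hI : medianIdx (X \ {xm}).card = medianIdx X.card := by
    simp only [medianIdx, hcard']
    omega
  have key : ∀ x ∈ X, x ≠ xm →
      (rank (X \ {xm}) x < medianIdx X.card ↔ rank X x < medianIdx X.card) := by
    intro x hx hne
    rw [rank_sdiff X xm x hxmX]
    rcases lt_trichotomy x xm with h | h | h
    · rw [if_neg (not_le.mpr h)]
    · exact absurd h hne
    · rw [if_pos h.le]
      have h1 := rank_lt_rank X hx h
      omega
  have hL : medL (X \ {xm}) = medL X := by
    ext y
    simp only [medL, mem_filter, mem_sdiff, mem_singleton, hI]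
    constructor
    · rintro ⟨⟨hy, hne⟩, hr⟩
      exact ⟨hy, (key y hy hne).mp hr⟩
    · rintro ⟨hy, hr⟩
      have hne : y ≠ xm := by
        rintro rfl
        omega
      exact ⟨⟨hy, hne⟩, (key y hy hne).mpr hr⟩
  refine ⟨hL, ?_⟩
  ext y
  simp only [medR, mem_filter, mem_sdiff, mem_singleton, hI]
  constructor
  · rintro ⟨⟨hy, hne⟩, hr⟩
    refine ⟨⟨hy, ?_⟩, hne⟩
    have := (key y hy hne)
    omega
  · rintro ⟨⟨hy, hr⟩, hne⟩
    refine ⟨⟨hy, hne⟩, ?_⟩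
    have := (key y hy hne)
    omega
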